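/- arXiv:1805.12093 — 3 statements merged into one kernel-verified Lean document; each statement's English description precedes it below -/
import Mathlib

section
/- Let G = (V, E) be a finite simple graph, a ∈ V with nonempty neighborhood N(a), and b₀ ∈ N(a). Let E₀ = {e ∈ E : a ∉ e}, E′ = {e ∈ E₀ : b₀ ∉ e}, and N₀(b₀) = {c ∈ V∖{a} : {c, b₀} ∈ E₀}. Then there exist nonzero complex scalars c₊, c₋ such that the post-measurement states of a Pauli-X measurement of qubit a on the graph state |G⟩ satisfy, as states of the qubits V∖{a}: H_{b₀} (⟨+|_a ⊗ I)|G⟩ = c₊ · ∏_{e∈E′} C_e · ∏_{c∈N₀(b₀)} ∏_{i∈N(a)∖{b₀}} C_{{c}∪{i}} · ∏_{i∈N(a)∖{b₀}} C_{{i,b₀}} |+⟩^{⊗(|V|−1)} and H_{b₀} (⟨−|_a ⊗ I)|G⟩ = c₋ · Z_{b₀} ∏_{c∈N₀(b₀)} Z_c · ∏_{e∈E′} C_e · ∏_{c∈N₀(b₀)} ∏_{i∈N(a)∖{b₀}} C_{{c}∪{i}} · ∏_{i∈N(a)∖{b₀}} C_{{i,b₀}} |+⟩^{⊗(|V|−1)}.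 In particular, for both outcomes the post-measurement state is a graph state up to the Hadamard on b₀ and Pauli-Z corrections, recovering the known graph-state Pauli-X measurement rule from the hypergraph-state rule. -/
noncomputable section

/-- The state space of qubits labeled by `ι`: a vector is the family of its
amplitudes in the computational basis `{|x⟩ : x : ι → Bool}`. -/
abbrev QState (ι : Type) := (ι → Bool) → ℂ

/-- The sign `(−1)^{∏_{i∈e} x_i}` of the generalized controlled-Z gate `C_e`
on the basis vector `|x⟩`. -/
def csign {ι : Type} (e : Finset ι) (x : ι → Bool) : ℂ :=
  if ∀ i ∈ e, x i = true then -1 else 1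

/-- The generalized controlled-Z gate `C_e`, the diagonal unitary with
`C_e |x⟩ = (−1)^{∏_{i∈e} x_i} |x⟩`. -/
def Cgate {ι : Type} (e : Finset ι) (ψ : QState ι) : QState ι :=
  fun x => csign e x * ψ x

/-- The Hadamard gate `H_i` on qubit `i`, acting as the identity on all other
qubits. -/
def Hgate {ι : Type} [DecidableEq ι] (i : ι) (ψ : QState ι) : QState ι :=
  fun x => (((Real.sqrt 2)⁻¹ : ℝ) : ℂ) *
    (ψ (Function.update x i false) +
      (if x i = true then -1 else 1) * ψ (Function.update x i true))

/-- The Pauli-X (bit flip) gate `X_i` on qubit `i`. -/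
def Xgate {ι : Type} [DecidableEq ι] (i : ι) (ψ : QState ι) : QState ι :=
  fun x => ψ (Function.update x i (!(x i)))

/-- The generalized CNOT gate with control set `f` and target `t ∉ f`:
it flips bit `t` of `x` exactly when `∏_{j∈f} x_j = 1`. -/
def CNOTgate {ι : Type} [DecidableEq ι] (f : Finset ι) (t : ι) (ψ : QState ι) : QState ι :=
  fun x => ψ (if ∀ j ∈ f, x j = true then Function.update x t (!(x t)) else x)

/-- `|+⟩^{⊗n}`, the uniform superposition `2^{−n/2} ∑_x |x⟩`. -/
def plusAll (ι : Type) [Fintype ι] : QState ι :=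
  fun _ => (((Real.sqrt 2)⁻¹ : ℝ) : ℂ) ^ (Fintype.card ι)

/-- The computational-basis ket `|s⟩`. -/
def zketS {ι : Type} [Fintype ι] [DecidableEq ι] (s : ι → Bool) : QState ι :=
  fun x => if x = s then 1 else 0

/-- The Pauli-X-basis product ket: qubit `i` is `|+⟩` if `s i = false` and
`|−⟩` if `s i = true`, where `|±⟩ = (|0⟩ ± |1⟩)/√2`. -/
def xketS {ι : Type} [Fintype ι] (s : ι → Bool) : QState ι :=
  fun x => ∏ i, ((((Real.sqrt 2)⁻¹ : ℝ) : ℂ) * (if s i && x i then -1 else 1))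

/-- Tensor product of a state of the qubits `κ` with a state of the qubits `ι`. -/
def tensP {κ ι : Type} (φ : QState κ) (u : QState ι) : QState (κ ⊕ ι) :=
  fun x => φ (fun i => x (Sum.inl i)) * u (fun j => x (Sum.inr j))

/-- The partial inner product `(⟨φ|_κ ⊗ I)`, sending a state of the qubits
`κ ⊕ ι` to a state of the remaining qubits `ι`. -/
def pinner {κ ι : Type} [Fintype κ] [DecidableEq κ] (φ : QState κ) (w : QState (κ ⊕ ι)) :
    QState ι :=
  fun y => ∑ b : κ → Bool, (starRingEnd ℂ) (φ b) * w (Sum.elim b y)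

/-- Tensor product of a single-qubit state on qubit `i` with a state of the
remaining qubits. -/
def tensQ {ι : Type} [DecidableEq ι] (i : ι) (φ : Bool → ℂ) (ψ : QState {j : ι // j ≠ i}) :
    QState ι :=
  fun x => φ (x i) * ψ (fun j => x j.1)

/-- The partial inner product over the single qubit `i`. -/
def pinner1 {ι : Type} [DecidableEq ι] (i : ι) (φ : Bool → ℂ) (w : QState ι) :
    QState {j : ι // j ≠ i} :=
  fun y => ∑ b : Bool, (starRingEnd ℂ) (φ b) * w (fun j => if h : j = i then b else y ⟨j, h⟩)

/-- The hypergraph state `∏_{e∈E} C_e |+⟩^{⊗|V|}` of the hypergraph `(V, E)`. -/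
def hgState {ι : Type} [Fintype ι] (E : Finset (Finset ι)) : QState ι :=
  fun x => (∏ e ∈ E, csign e x) * plusAll ι x

/-- Sequential composition (operator product) of a list of operators. -/
def seqComp {α : Type} (fs : List (α → α)) : α → α := fs.foldr (· ∘ ·) id

/-!
Measuring qubit `a` of a hypergraph state in the X basis leaves the hypergraph state of the edges
avoiding `a`, multiplied by `1 ± ∏_{e ∋ a} C_{e ∖ {a}}`; for a graph the second factor is
`1 ± Z_{N(a)}`. Every diagonal sign is written as `(-1)^p` for a parity `p`, a sum in the Boolean
ring `Bool` (where `+` is `xor` and `*` is `&&`). Both the edges at `b₀` and `Z_{N(a)}` depend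
affinely on the bit `y_{b₀}`, so the Hadamard on `b₀`, which sums over that bit, reduces the claim
to an identity between signs of four parities, checked case by case.
-/

local notation "r₂" => (((Real.sqrt 2)⁻¹ : ℝ) : ℂ)

section Sign

def signOf (b : Bool) : ℂ := if b then -1 else 1

@[simp] theorem signOf_false : signOf false = 1 := rfl

@[simp] theorem signOf_true : signOf true = -1 := rfl

theorem signOf_add (p q : Bool) : signOf (p + q) = signOf p * signOf q := by
  cases p <;> cases q <;> norm_num [signOf, Bool.add_eq_xor]

theorem signOf_sum {α : Type*} (s : Finset α) (f : α → Bool) :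
    signOf (∑ i ∈ s, f i) = ∏ i ∈ s, signOf (f i) := by
  classical
  induction s using Finset.induction_on with
  | empty => rfl
  | insert i s hi ih => rw [Finset.sum_insert hi, Finset.prod_insert hi, signOf_add, ih]

theorem prod_signOf_mul_left {α : Type*} (s : Finset α) (p : Bool) (f : α → Bool) :
    ∏ i ∈ s, signOf (p * f i) = signOf (p * ∑ i ∈ s, f i) := by
  rw [Finset.mul_sum, signOf_sum]

theorem conj_signOf (b : Bool) : starRingEnd ℂ (signOf b) = signOf b := by
  cases b <;> simp [signOf]

theorem sum_signOf_hadamard (ε t ρ x : Bool) :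
    ∑ β : Bool, signOf (x * β) * (signOf (β * ρ) * (1 + signOf (ε + (β + t))))
      = 2 * (signOf (ε * (x + ρ)) * (signOf (ρ * t) * signOf (t * x))) := by
  cases ε <;> cases t <;> cases ρ <;> cases x <;>
    norm_num [Fintype.sum_bool, Bool.mul_eq_and, Bool.add_eq_xor]

end Sign

section CSign

variable {ι κ : Type}

theorem csign_eq_of_iff {e : Finset ι} {e' : Finset κ} {x : ι → Bool} {x' : κ → Bool}
    (h : (∀ i ∈ e, x i = true) ↔ ∀ i ∈ e', x' i = true) : csign e x = csign e' x' :=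
  if_congr h rfl rfl

theorem csign_congr (e : Finset ι) {x x' : ι → Bool} (h : ∀ i ∈ e, x i = x' i) :
    csign e x = csign e x' :=
  csign_eq_of_iff (forall₂_congr fun i hi => by rw [h i hi])

theorem csign_eq_one_of_eq_false {a : ι} {e : Finset ι} (ha : a ∈ e) {x : ι → Bool}
    (hx : x a = false) : csign e x = 1 :=
  if_neg fun h => by simpa [hx] using h a ha

theorem csign_singleton (u : ι) (x : ι → Bool) : csign {u} x = signOf (x u) := by
  simp [csign, signOf]

theorem csign_singleton_mul_prod (s : Finset ι) (b : ι) (y : ι → Bool) :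
    csign {b} y * ∏ c ∈ s, csign {c} y = signOf (y b + ∑ c ∈ s, y c) := by
  simp only [csign_singleton, signOf_add, signOf_sum]

variable [DecidableEq ι]

theorem csign_pair (u v : ι) (x : ι → Bool) : csign {u, v} x = signOf (x u * x v) := by
  simp [csign, signOf, Bool.mul_eq_and]

theorem prod_prod_csign_pair (s t : Finset ι) (y : ι → Bool) :
    ∏ c ∈ s, ∏ i ∈ t, csign {c, i} y = signOf ((∑ c ∈ s, y c) * ∑ i ∈ t, y i) := by
  simp only [csign_pair, prod_signOf_mul_left, Finset.sum_mul, signOf_sum]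

theorem prod_csign_pair_right (t : Finset ι) (b : ι) (y : ι → Bool) :
    ∏ i ∈ t, csign {i, b} y = signOf ((∑ i ∈ t, y i) * y b) := by
  simp only [csign_pair, Finset.sum_mul, signOf_sum]

theorem csign_erase_of_eq_true {a : ι} (e : Finset ι) {x : ι → Bool} (hx : x a = true) :
    csign (e.erase a) x = csign e x := by
  refine csign_eq_of_iff ⟨fun h i hi => ?_, fun h i hi => h i (Finset.mem_of_mem_erase hi)⟩
  by_cases hia : i = a
  · exact hia ▸ hx
  · exact h i (Finset.mem_erase.2 ⟨hia, hi⟩)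

theorem csign_subtype_ne {a : ι} {e : Finset ι} (hae : a ∉ e) (x : ι → Bool) :
    csign (e.subtype (· ≠ a)) (fun j => x j) = csign e x := by
  refine csign_eq_of_iff ⟨fun h i hi => ?_, fun h i hi => h i (Finset.mem_subtype.1 hi)⟩
  exact h ⟨i, fun hia => hae (hia ▸ hi)⟩ (Finset.mem_subtype.2 hi)

theorem csign_dite_of_notMem {a : ι} {e : Finset ι} (hae : a ∉ e) (b : Bool)
    (z : {j // j ≠ a} → Bool) :
    csign e (fun j => if h : j = a then b else z ⟨j, h⟩) = csign (e.subtype (· ≠ a)) z := by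
  rw [← csign_subtype_ne hae]
  congr
  funext j
  simp [j.2]

theorem csign_dite_true {a : ι} (e : Finset ι) (z : {j // j ≠ a} → Bool) :
    csign e (fun j => if h : j = a then true else z ⟨j, h⟩)
      = csign ((e.erase a).subtype (· ≠ a)) z := by
  rw [← csign_erase_of_eq_true e (dif_pos rfl), csign_dite_of_notMem (Finset.notMem_erase a e)]

end CSign

section Hypergraph

variable {ι : Type} [DecidableEq ι]

theorem Hgate_apply (i : ι) (ψ : QState ι) (x : ι → Bool) :
    Hgate i ψ x = r₂ * ∑ β : Bool, signOf (x i * β) * ψ (Function.update x i β) := by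
  simp only [Hgate, Fintype.sum_bool, Bool.mul_eq_and, Bool.and_true, Bool.and_false,
    signOf_false, one_mul, add_comm (signOf (x i) * _)]
  rfl

theorem prod_image_subtype_ne {M : Type*} [CommMonoid M] {a : ι} {F : Finset (Finset ι)}
    (hFa : ∀ e ∈ F, a ∉ e) (f : Finset {j // j ≠ a} → M) :
    ∏ e ∈ F.image (Finset.subtype (· ≠ a)), f e = ∏ e ∈ F, f (e.subtype (· ≠ a)) := by
  refine Finset.prod_image fun e₁ h₁ e₂ h₂ h => ?_
  rw [← Finset.subtype_map_of_mem (p := (· ≠ a)) fun i hi hia => hFa e₁ h₁ (hia ▸ hi),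
    ← Finset.subtype_map_of_mem (p := (· ≠ a)) fun i hi hia => hFa e₂ h₂ (hia ▸ hi)]
  exact congrArg _ h

variable [Fintype ι]

theorem card_subtype_ne_add_one (a : ι) : Fintype.card {j // j ≠ a} + 1 = Fintype.card ι := by
  rw [Fintype.card_subtype_compl, Fintype.card_subtype_eq]
  have := Fintype.card_pos_iff.2 ⟨a⟩
  omega

theorem pinner1_hgState (E : Finset (Finset ι)) (a : ι) (ε : Bool) (z : {j // j ≠ a} → Bool) :
    pinner1 a (fun b => r₂ * signOf (ε * b)) (hgState E) z
      = r₂ ^ (Fintype.card ι + 1) * ((∏ e ∈ E with a ∉ e, csign (e.subtype (· ≠ a)) z) *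
          (1 + signOf ε * ∏ e ∈ E with a ∈ e, csign ((e.erase a).subtype (· ≠ a)) z)) := by
  simp only [pinner1, hgState, plusAll, Fintype.sum_bool, map_mul, Complex.conj_ofReal,
    conj_signOf, ← Finset.prod_filter_mul_prod_filter_not E (fun e => a ∈ e)]
  rw [Finset.prod_congr rfl fun e _ => csign_dite_true e z,
    Finset.prod_eq_one fun e he =>
      csign_eq_one_of_eq_false (Finset.mem_filter.1 he).2 (dif_pos rfl),
    Finset.prod_congr rfl fun e he => csign_dite_of_notMem (Finset.mem_filter.1 he).2 true z,
    Finset.prod_congr rfl fun e he => csign_dite_of_notMem (Finset.mem_filter.1 he).2 false z]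
  simp only [Bool.mul_eq_and, Bool.and_true, Bool.and_false, signOf_false]
  ring

end Hypergraph

section Graph

variable {ι : Type} [DecidableEq ι]

theorem ne_of_pair_mem {E : Finset (Finset ι)} (hE : ∀ e ∈ E, e.card = 2) {u v : ι}
    (h : ({u, v} : Finset ι) ∈ E) : u ≠ v := by
  rintro rfl
  simpa using hE _ h

theorem exists_eq_pair_of_mem {E : Finset (Finset ι)} (hE : ∀ e ∈ E, e.card = 2) {e : Finset ι}
    (he : e ∈ E) {v : ι} (hv : v ∈ e) : ∃ u, u ≠ v ∧ e = {v, u} := by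
  obtain ⟨u, hu⟩ := Finset.card_eq_one.1 (by rw [Finset.card_erase_of_mem hv, hE e he])
  refine ⟨u, Finset.ne_of_mem_erase (hu ▸ Finset.mem_singleton_self u), ?_⟩
  rw [← Finset.insert_erase hv, hu]

theorem prod_filter_mem_eq_prod_neighbors [Fintype ι] {M : Type*} [CommMonoid M]
    {E : Finset (Finset ι)} (hE : ∀ e ∈ E, e.card = 2) (v : ι) {p : ι → Prop} [DecidablePred p]
    (hp : ∀ e ∈ E, v ∈ e → ∀ u ∈ e, u ≠ v → p u) (f : Finset ι → M) :
    ∏ e ∈ E with v ∈ e, f e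
      = ∏ u ∈ (Finset.univ : Finset (Subtype p)) with {v, u.1} ∈ E, f {v, u.1} := by
  refine (Finset.prod_bij (fun u _ => ({v, u.1} : Finset ι)) ?_ ?_ ?_ fun _ _ => rfl).symm
  · intro u hu
    simpa using hu
  · intro u₁ hu₁ u₂ hu₂ h
    have hne : u₁.1 ≠ v := (ne_of_pair_mem hE (Finset.mem_filter.1 hu₁).2).symm
    have : u₁.1 ∈ ({v, u₂.1} : Finset ι) :=
      h ▸ Finset.mem_insert_of_mem (Finset.mem_singleton_self _)
    simpa [hne, Subtype.ext_iff] using this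
  · intro e he
    obtain ⟨he, hve⟩ := Finset.mem_filter.1 he
    obtain ⟨u, huv, rfl⟩ := exists_eq_pair_of_mem hE he hve
    exact ⟨⟨u, hp _ he hve u (by simp) huv⟩, by simpa using he, rfl⟩

end Graph

section GraphState

variable {ι : Type} [Fintype ι] [DecidableEq ι]

theorem pinner1_graphState {E : Finset (Finset ι)} (hE : ∀ e ∈ E, e.card = 2) (a : ι)
    (ε : Bool) (z : {j // j ≠ a} → Bool) :
    pinner1 a (fun b => r₂ * signOf (ε * b)) (hgState E) z
      = r₂ ^ (Fintype.card ι + 1) * ((∏ e ∈ E with a ∉ e, csign (e.subtype (· ≠ a)) z) *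
          (1 + signOf (ε + ∑ i ∈ (Finset.univ : Finset {j // j ≠ a}) with {a, i.1} ∈ E, z i))) := by
  have erase_pair (i : {j // j ≠ a}) : (({a, i.1} : Finset ι).erase a).subtype (· ≠ a) = {i} := by
    ext w
    simp [Subtype.ext_iff, w.2]
  rw [pinner1_hgState, prod_filter_mem_eq_prod_neighbors hE a (fun _ _ _ _ _ h => h), signOf_add,
    signOf_sum]
  simp only [erase_pair, csign_singleton]

theorem prod_csign_subtype_update {a b₀ : ι} (hb₀a : b₀ ≠ a) {F : Finset (Finset ι)}
    (hF : ∀ e ∈ F, e.card = 2) (hFa : ∀ e ∈ F, a ∉ e) (y : {j // j ≠ a} → Bool) (β : Bool) :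
    ∏ e ∈ F, csign (e.subtype (· ≠ a)) (Function.update y ⟨b₀, hb₀a⟩ β)
      = (∏ e ∈ F with b₀ ∉ e, csign (e.subtype (· ≠ a)) y) *
        signOf (β * ∑ c ∈ (Finset.univ : Finset {j // j ≠ a}) with {c.1, b₀} ∈ F, y c) := by
  rw [← Finset.prod_filter_not_mul_prod_filter F (fun e => b₀ ∈ e)]
  congr 1
  · refine Finset.prod_congr rfl fun e he => csign_congr _ fun i hi => ?_
    refine Function.update_of_ne (fun h => (Finset.mem_filter.1 he).2 ?_) _ _
    simpa [h] using hi
  · rw [prod_filter_mem_eq_prod_neighbors hF b₀ (p := (· ≠ a))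
      (fun e he _ u hu _ hua => hFa e he (hua ▸ hu)), ← prod_signOf_mul_left]
    simp only [Finset.pair_comm b₀]
    refine Finset.prod_congr rfl fun c hc => ?_
    have hcb : c ≠ ⟨b₀, hb₀a⟩ := fun h =>
      ne_of_pair_mem hF (Finset.mem_filter.1 hc).2 (congrArg Subtype.val h)
    have subtype_pair : ({c.1, b₀} : Finset ι).subtype (· ≠ a) = {c, ⟨b₀, hb₀a⟩} := by
      ext w
      simp [Subtype.ext_iff]
    rw [subtype_pair, csign_pair, Function.update_of_ne hcb, Function.update_self, mul_comm]

theorem sum_update_neighbors {E : Finset (Finset ι)} {a b₀ : ι} (hb₀a : b₀ ≠ a)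
    (hb₀ : ({a, b₀} : Finset ι) ∈ E) (y : {j // j ≠ a} → Bool) (β : Bool) :
    ∑ i ∈ (Finset.univ : Finset {j // j ≠ a}) with {a, i.1} ∈ E,
        Function.update y ⟨b₀, hb₀a⟩ β i
      = β + ∑ i ∈ (Finset.univ : Finset {j // j ≠ a}) with ({a, i.1} ∈ E ∧ i.1 ≠ b₀), y i := by
  rw [Finset.sum_update_of_mem (by simpa using hb₀)]
  congr 1
  refine Finset.sum_congr ?_ fun _ _ => rfl
  ext i
  simp [Subtype.ext_iff, and_comm]

theorem Hgate_pinner1_graphState {E : Finset (Finset ι)} (hE : ∀ e ∈ E, e.card = 2) {a b₀ : ι}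
    (hb₀a : b₀ ≠ a) (hb₀ : ({a, b₀} : Finset ι) ∈ E) (ε : Bool) (y : {j // j ≠ a} → Bool) :
    Hgate ⟨b₀, hb₀a⟩ (pinner1 a (fun b => r₂ * signOf (ε * b)) (hgState E)) y
      = 2 * r₂ ^ 3 *
        (signOf (ε * (y ⟨b₀, hb₀a⟩ + ∑ c ∈ Finset.univ.filter (fun c : {j // j ≠ a} =>
            ({c.1, b₀} : Finset ι) ∈ E.filter fun e => a ∉ e), y c)) *
        ((∏ e ∈ ((E.filter fun e => a ∉ e).filter fun e => b₀ ∉ e).image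
            (Finset.subtype fun j => j ≠ a), csign e y) *
        (signOf ((∑ c ∈ Finset.univ.filter (fun c : {j // j ≠ a} =>
            ({c.1, b₀} : Finset ι) ∈ E.filter fun e => a ∉ e), y c) *
          ∑ i ∈ Finset.univ.filter (fun i : {j // j ≠ a} =>
            ({a, i.1} : Finset ι) ∈ E ∧ i.1 ≠ b₀), y i) *
        (signOf ((∑ i ∈ Finset.univ.filter (fun i : {j // j ≠ a} =>
            ({a, i.1} : Finset ι) ∈ E ∧ i.1 ≠ b₀), y i) * y ⟨b₀, hb₀a⟩) *
          plusAll {j // j ≠ a} y)))) := by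
  have hF : ∀ e ∈ E.filter fun e => a ∉ e, e.card = 2 := fun e he =>
    hE e (Finset.mem_filter.1 he).1
  have hFa : ∀ e ∈ E.filter fun e => a ∉ e, a ∉ e := fun e he => (Finset.mem_filter.1 he).2
  rw [Hgate_apply, prod_image_subtype_ne fun e he => hFa e (Finset.mem_filter.1 he).1]
  simp only [pinner1_graphState hE, prod_csign_subtype_update hb₀a hF hFa,
    sum_update_neighbors hb₀a hb₀]
  have key := sum_signOf_hadamard ε
    (∑ i ∈ Finset.univ.filter (fun i : {j // j ≠ a} => ({a, i.1} : Finset ι) ∈ E ∧ i.1 ≠ b₀), y i)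
    (∑ c ∈ Finset.univ.filter (fun c : {j // j ≠ a} =>
      ({c.1, b₀} : Finset ι) ∈ E.filter fun e => a ∉ e), y c) (y ⟨b₀, hb₀a⟩)
  rw [Fintype.sum_bool] at key ⊢
  rw [plusAll, ← card_subtype_ne_add_one a]
  linear_combination (r₂ ^ (Fintype.card {j // j ≠ a} + 3) *
    ∏ e ∈ (E.filter fun e => a ∉ e).filter fun e => b₀ ∉ e, csign (e.subtype (· ≠ a)) y) * key

end GraphState

/-- The Pauli-X measurement rule for graph states, recovered
from the hypergraph-state rule.  `G = (V,E)` is a finite simple graph (edges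
are 2-element subsets), `a` a vertex, `b₀ ∈ N(a)` (so `{a,b₀} ∈ E` and
`b₀ ≠ a`).  With `E₀ = {e ∈ E : a ∉ e}`, `E′ = {e ∈ E₀ : b₀ ∉ e}` and
`N₀(b₀) = {c ∈ V∖{a} : {c,b₀} ∈ E₀}`, there are nonzero scalars `c₊, c₋` with
`H_{b₀} (⟨+|_a ⊗ I)|G⟩ = c₊ · ∏_{e∈E′} C_e · ∏_{c∈N₀(b₀)} ∏_{i∈N(a)∖{b₀}} C_{{c}∪{i}}
  · ∏_{i∈N(a)∖{b₀}} C_{{i,b₀}} |+⟩^{⊗(|V|−1)}` and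
`H_{b₀} (⟨−|_a ⊗ I)|G⟩ = c₋ · Z_{b₀} ∏_{c∈N₀(b₀)} Z_c · (same products) |+⟩^{⊗(|V|−1)}`. -/
theorem graph_state_X_measurement_rule {ι : Type} [Fintype ι] [DecidableEq ι]
    (E : Finset (Finset ι)) (hE : ∀ e ∈ E, e.card = 2) (a b₀ : ι)
    (hb₀a : b₀ ≠ a) (hb₀ : ({a, b₀} : Finset ι) ∈ E) :
    ∃ cp cm : ℂ, cp ≠ 0 ∧ cm ≠ 0 ∧
      Hgate (⟨b₀, hb₀a⟩ : {j : ι // j ≠ a})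
          (pinner1 a (fun _ => (((Real.sqrt 2)⁻¹ : ℝ) : ℂ)) (hgState E))
        = cp • (fun y : {j : ι // j ≠ a} → Bool =>
            (∏ e ∈ ((E.filter fun e => a ∉ e).filter fun e => b₀ ∉ e).image
                (Finset.subtype fun j => j ≠ a), csign e y) *
            ((∏ c ∈ Finset.univ.filter (fun c : {j : ι // j ≠ a} =>
                  ({c.1, b₀} : Finset ι) ∈ E.filter fun e => a ∉ e),
                ∏ i ∈ Finset.univ.filter (fun i : {j : ι // j ≠ a} =>
                    ({a, i.1} : Finset ι) ∈ E ∧ i.1 ≠ b₀),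
                  csign ({c, i} : Finset {j : ι // j ≠ a}) y) *
            ((∏ i ∈ Finset.univ.filter (fun i : {j : ι // j ≠ a} =>
                  ({a, i.1} : Finset ι) ∈ E ∧ i.1 ≠ b₀),
                csign ({i, ⟨b₀, hb₀a⟩} : Finset {j : ι // j ≠ a}) y) *
              plusAll {j : ι // j ≠ a} y))) ∧
      Hgate (⟨b₀, hb₀a⟩ : {j : ι // j ≠ a})
          (pinner1 a (fun b => (((Real.sqrt 2)⁻¹ : ℝ) : ℂ) * (if b then -1 else 1))
            (hgState E))
        = cm • (fun y : {j : ι // j ≠ a} → Bool =>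
            csign ({(⟨b₀, hb₀a⟩ : {j : ι // j ≠ a})} : Finset {j : ι // j ≠ a}) y *
            ((∏ c ∈ Finset.univ.filter (fun c : {j : ι // j ≠ a} =>
                  ({c.1, b₀} : Finset ι) ∈ E.filter fun e => a ∉ e),
                csign ({c} : Finset {j : ι // j ≠ a}) y) *
            ((∏ e ∈ ((E.filter fun e => a ∉ e).filter fun e => b₀ ∉ e).image
                (Finset.subtype fun j => j ≠ a), csign e y) *
            ((∏ c ∈ Finset.univ.filter (fun c : {j : ι // j ≠ a} =>
                  ({c.1, b₀} : Finset ι) ∈ E.filter fun e => a ∉ e),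
                ∏ i ∈ Finset.univ.filter (fun i : {j : ι // j ≠ a} =>
                    ({a, i.1} : Finset ι) ∈ E ∧ i.1 ≠ b₀),
                  csign ({c, i} : Finset {j : ι // j ≠ a}) y) *
            ((∏ i ∈ Finset.univ.filter (fun i : {j : ι // j ≠ a} =>
                  ({a, i.1} : Finset ι) ∈ E ∧ i.1 ≠ b₀),
                csign ({i, ⟨b₀, hb₀a⟩} : Finset {j : ι // j ≠ a}) y) *
              plusAll {j : ι // j ≠ a} y))))) := by
  -- one factor `2^{-1/2}` each from `⟨±|_a`, from `H_{b₀}` and from the extra qubit of `|+⟩^{⊗|V|}`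
  have hc : (2 : ℂ) * r₂ ^ 3 ≠ 0 := by
    have : (Real.sqrt 2)⁻¹ ≠ 0 := by positivity
    exact mul_ne_zero two_ne_zero (pow_ne_zero 3 (Complex.ofReal_ne_zero.2 this))
  refine ⟨2 * r₂ ^ 3, 2 * r₂ ^ 3, hc, hc, funext fun y => ?_, funext fun y => ?_⟩
  · have hplus : (fun _ : Bool => r₂) = fun b => r₂ * signOf (false * b) := by
      funext b
      simp [Bool.mul_eq_and]
    simp only [hplus, Hgate_pinner1_graphState hE hb₀a hb₀, Pi.smul_apply, smul_eq_mul,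
      prod_prod_csign_pair, prod_csign_pair_right]
    simp [Bool.mul_eq_and, mul_assoc]
  · have hminus : (fun b : Bool => r₂ * if b then -1 else 1) = fun b => r₂ * signOf (true * b) :=
      rfl
    simp only [hminus, Hgate_pinner1_graphState hE hb₀a hb₀, Pi.smul_apply, smul_eq_mul,
      prod_prod_csign_pair, prod_csign_pair_right, ← mul_assoc (csign _ y),
      csign_singleton_mul_prod]
    simp only [Bool.mul_eq_and, Bool.true_and, mul_assoc]
end
end

section
/- Let N ≥ 2, let qubit 1 be distinguished, and let Ẽ be a finite set of nonempty subsets of {2,…,N}. Then, as states of all N qubits: |0⟩_1 ⊗ |+⟩^{⊗(N−1)} + |1⟩_1 ⊗ ∏_{ẽ∈Ẽ} C_{ẽ} |+⟩^{⊗(N−1)} = √2 · ∏_{ẽ∈Ẽ} C_{ẽ∪{1}} |+⟩^{⊗N}, and |0⟩_1 ⊗ |+⟩^{⊗(N−1)} − |1⟩_1 ⊗ ∏_{ẽ∈Ẽ} C_{ẽ} |+⟩^{⊗(N−1)} = √2 · Z_1 ∏_{ẽ∈Ẽ} C_{ẽ∪{1}} |+⟩^{⊗N}. -/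
noncomputable section

/-
Compare amplitudes at each basis vector `|b, y⟩`, `b` the bit of qubit 1. The sign of
`C_{ẽ∪{1}}` there is `1` if `b = 0` and the sign of `C_ẽ` at `y` if `b = 1`, while
`√2 · 2^{-N/2} = 2^{-(N-1)/2}`. So the right-hand sides have amplitude `2^{-(N-1)/2}` at
`b = 0` and `± ∏ csign ẽ y · 2^{-(N-1)/2}` at `b = 1`, exactly as the left-hand sides.
-/

lemma csign_singleton_s15 {κ : Type} (a : κ) (x : κ → Bool) :
    csign {a} x = if x a then -1 else 1 := by
  simp [csign]

lemma csign_insert_map {ι κ : Type} [DecidableEq κ] (a : κ) (f : ι ↪ κ) (e : Finset ι)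
    (x : κ → Bool) :
    csign (insert a (e.map f)) x = if x a then csign e (x ∘ f) else 1 := by
  cases h : x a <;> simp [csign, h]

lemma prod_csign_insert_map {ι κ : Type} [DecidableEq κ] (a : κ) (f : ι ↪ κ)
    (E : Finset (Finset ι)) (x : κ → Bool) :
    ∏ e ∈ E, csign (insert a (e.map f)) x = if x a then ∏ e ∈ E, csign e (x ∘ f) else 1 := by
  cases h : x a <;> simp [csign_insert_map, h]

lemma sqrt_two_mul_plusAll_sum_unit {ι : Type} [Fintype ι] (x : (Unit ⊕ ι) → Bool) :
    (Real.sqrt 2 : ℂ) * plusAll (Unit ⊕ ι) x = plusAll ι (x ∘ Sum.inr) := by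
  have h2 : (Real.sqrt 2 : ℂ) ≠ 0 := Complex.ofReal_ne_zero.mpr (by positivity)
  simp only [plusAll, Fintype.card_sum, Fintype.card_unit, pow_add, pow_one]
  push_cast
  field_simp

lemma tensP_zketS_unit_apply {ι : Type} (b : Bool) (ψ : QState ι) (x : (Unit ⊕ ι) → Bool) :
    tensP (zketS (fun _ : Unit => b)) ψ x = if x (Sum.inl ()) = b then ψ (x ∘ Sum.inr) else 0 := by
  simp [tensP, zketS, funext_iff, Function.comp_def, Unique.forall_iff]

/-- Qubit 1 is modelled by `Sum.inl ()`, the remaining qubits by `ι`. -/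
theorem expansion_merging_rule_general {ι : Type} [Fintype ι] [DecidableEq ι]
    (Et : Finset (Finset ι)) :
    (tensP (zketS (fun _ : Unit => false)) (plusAll ι)
      + tensP (zketS (fun _ : Unit => true))
          (fun x => (∏ e ∈ Et, csign e x) * plusAll ι x)
      = (Real.sqrt 2 : ℂ) • (fun x : (Unit ⊕ ι) → Bool =>
          (∏ e ∈ Et,
            csign (insert (Sum.inl ())
              (e.map ⟨Sum.inr, Sum.inr_injective⟩ : Finset (Unit ⊕ ι))) x) *
          plusAll (Unit ⊕ ι) x)) ∧
    (tensP (zketS (fun _ : Unit => false)) (plusAll ι)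
      - tensP (zketS (fun _ : Unit => true))
          (fun x => (∏ e ∈ Et, csign e x) * plusAll ι x)
      = (Real.sqrt 2 : ℂ) • (fun x : (Unit ⊕ ι) → Bool =>
          csign ({Sum.inl ()} : Finset (Unit ⊕ ι)) x *
          ((∏ e ∈ Et,
            csign (insert (Sum.inl ())
              (e.map ⟨Sum.inr, Sum.inr_injective⟩ : Finset (Unit ⊕ ι))) x) *
          plusAll (Unit ⊕ ι) x))) := by
  constructor <;> funext x <;>
    simp only [Pi.add_apply, Pi.sub_apply, Pi.smul_apply, smul_eq_mul, tensP_zketS_unit_apply,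
      prod_csign_insert_map, csign_singleton_s15] <;>
    cases x (Sum.inl ()) <;>
    simp only [mul_left_comm (Real.sqrt 2 : ℂ), sqrt_two_mul_plusAll_sum_unit] <;>
    simp [Function.comp_def]

/-- With qubit 1 modeled by `Sum.inl ()` and the remaining
`N−1 ≥ 1` qubits by a finite type `ι`, for any finite set `Ẽ` of nonempty
subsets of the remaining qubits:
`|0⟩₁ ⊗ |+⟩^{⊗(N−1)} + |1⟩₁ ⊗ ∏_{ẽ∈Ẽ} C_ẽ |+⟩^{⊗(N−1)}
  = √2 · ∏_{ẽ∈Ẽ} C_{ẽ∪{1}} |+⟩^{⊗N}` and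
`|0⟩₁ ⊗ |+⟩^{⊗(N−1)} − |1⟩₁ ⊗ ∏_{ẽ∈Ẽ} C_ẽ |+⟩^{⊗(N−1)}
  = √2 · Z₁ ∏_{ẽ∈Ẽ} C_{ẽ∪{1}} |+⟩^{⊗N}`. -/
theorem expansion_merging_rule {ι : Type} [Fintype ι] [DecidableEq ι]
    (hN : 1 ≤ Fintype.card ι)
    (Et : Finset (Finset ι)) (hEt : ∀ e ∈ Et, e.Nonempty) :
    (tensP (zketS (fun _ : Unit => false)) (plusAll ι)
      + tensP (zketS (fun _ : Unit => true))
          (fun x => (∏ e ∈ Et, csign e x) * plusAll ι x)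
      = (Real.sqrt 2 : ℂ) • (fun x : (Unit ⊕ ι) → Bool =>
          (∏ e ∈ Et,
            csign (insert (Sum.inl ())
              (e.map ⟨Sum.inr, Sum.inr_injective⟩ : Finset (Unit ⊕ ι))) x) *
          plusAll (Unit ⊕ ι) x)) ∧
    (tensP (zketS (fun _ : Unit => false)) (plusAll ι)
      - tensP (zketS (fun _ : Unit => true))
          (fun x => (∏ e ∈ Et, csign e x) * plusAll ι x)
      = (Real.sqrt 2 : ℂ) • (fun x : (Unit ⊕ ι) → Bool =>
          csign ({Sum.inl ()} : Finset (Unit ⊕ ι)) x *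
          ((∏ e ∈ Et,
            csign (insert (Sum.inl ())
              (e.map ⟨Sum.inr, Sum.inr_injective⟩ : Finset (Unit ⊕ ι))) x) *
          plusAll (Unit ⊕ ι) x))) :=
  expansion_merging_rule_general Et
end
end

section
/- Let qubit 1 be distinguished, let F and Ẽ be finite sets of nonempty finite sets of qubit labels, none of whose members contains qubit 1. Then applying the generalized CNOT gates with target 1 and control sets from F to the hypergraph state whose hyperedges are {ẽ∪{1} : ẽ∈Ẽ} toggles exactly the hyperedges {f∪ẽ}: ( ∏_{f∈F} CNOT_{f,1} ) ∏_{ẽ∈Ẽ} C_{ẽ∪{1}} |+⟩^{⊗N} = ∏_{f∈F} ∏_{ẽ∈Ẽ} C_{f∪ẽ} · ∏_{ẽ∈Ẽ} C_{ẽ∪{1}} |+⟩^{⊗N}. -/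
/-! On a basis state `|x⟩`, `CNOT_{f,t}` flips `x_t` exactly when `x` is `1` on all of `f`.
Since `t ∉ ẽ`, this flip multiplies the sign of `C_{ẽ∪{t}}` by the sign of `C_{f∪ẽ}`,
while every sign not involving qubit `t` (in particular those of the `C_{f'∪ẽ}` created
by earlier gates) is unchanged; so the gates can be pushed through one at a time. -/

noncomputable section

lemma seqComp_cons {α : Type} (f : α → α) (fs : List (α → α)) :
    seqComp (f :: fs) = f ∘ seqComp fs := rfl

section Hypergraph

variable {ι : Type}

lemma csign_mul_self (e : Finset ι) (x : ι → Bool) : csign e x * csign e x = 1 := by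
  unfold csign; split_ifs <;> norm_num

variable [DecidableEq ι]

lemma csign_insert (t : ι) (e : Finset ι) (x : ι → Bool) :
    csign (insert t e) x = if x t = true then csign e x else 1 := by
  by_cases hxt : x t = true <;> simp [csign, hxt]

lemma csign_union (f e : Finset ι) (x : ι → Bool) :
    csign (f ∪ e) x = if ∀ j ∈ f, x j = true then csign e x else 1 := by
  simp only [csign, Finset.mem_union, or_imp, forall_and, ite_and]

lemma csign_update_of_notMem {e : Finset ι} {t : ι} (ht : t ∉ e) (x : ι → Bool) (b : Bool) :
    csign e (Function.update x t b) = csign e x := by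
  unfold csign
  congr 1
  exact propext <| forall₂_congr fun i hi => by
    rw [Function.update_of_ne (ne_of_mem_of_not_mem hi ht)]

def cnotMap (f : Finset ι) (t : ι) (x : ι → Bool) : ι → Bool :=
  if ∀ j ∈ f, x j = true then Function.update x t (!(x t)) else x

lemma CNOTgate_apply (f : Finset ι) (t : ι) (ψ : QState ι) (x : ι → Bool) :
    CNOTgate f t ψ x = ψ (cnotMap f t x) := rfl

lemma csign_cnotMap_of_notMem {e : Finset ι} {t : ι} (ht : t ∉ e) (f : Finset ι)
    (x : ι → Bool) : csign e (cnotMap f t x) = csign e x := by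
  unfold cnotMap
  split_ifs
  exacts [csign_update_of_notMem ht x _, rfl]

lemma csign_insert_cnotMap {f e : Finset ι} {t : ι} (he : t ∉ e) (x : ι → Bool) :
    csign (insert t e) (cnotMap f t x) = csign (f ∪ e) x * csign (insert t e) x := by
  rw [csign_insert, csign_insert, csign_union, csign_cnotMap_of_notMem he]
  by_cases hfx : ∀ j ∈ f, x j = true
  · have hflip : cnotMap f t x t = !(x t) := by rw [cnotMap, if_pos hfx, Function.update_self]
    rw [hflip, if_pos hfx]
    cases x t <;> simp [csign_mul_self]
  · have hfix : cnotMap f t x = x := if_neg hfx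
    rw [hfix, if_neg hfx, one_mul]

variable [Fintype ι]

lemma CNOTgate_mul_hyperedges {f : Finset ι} {t : ι} (Et : Finset (Finset ι))
    (hEt : ∀ e ∈ Et, t ∉ e) (g : QState ι) (hg : ∀ x, g (cnotMap f t x) = g x) :
    CNOTgate f t (fun x => g x * ((∏ e ∈ Et, csign (insert t e) x) * plusAll ι x)) =
      fun x => g x * ((∏ e ∈ Et, csign (f ∪ e) x) *
        ((∏ e ∈ Et, csign (insert t e) x) * plusAll ι x)) := by
  funext x
  have htoggle : ∏ e ∈ Et, csign (insert t e) (cnotMap f t x) =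
      (∏ e ∈ Et, csign (f ∪ e) x) * ∏ e ∈ Et, csign (insert t e) x := by
    rw [← Finset.prod_mul_distrib]
    exact Finset.prod_congr rfl fun e he => csign_insert_cnotMap (hEt e he) x
  rw [CNOTgate_apply, hg, htoggle]
  simp only [plusAll, mul_assoc]

lemma seqComp_map_CNOTgate {t : ι} (Et : Finset (Finset ι)) (hEt : ∀ e ∈ Et, t ∉ e)
    (l : List (Finset ι)) (hl : ∀ f ∈ l, t ∉ f) :
    seqComp (l.map fun f => CNOTgate f t)
        (fun x => (∏ e ∈ Et, csign (insert t e) x) * plusAll ι x) =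
      fun x => (l.map fun f => ∏ e ∈ Et, csign (f ∪ e) x).prod *
        ((∏ e ∈ Et, csign (insert t e) x) * plusAll ι x) := by
  induction l with
  | nil => funext x; simp [seqComp]
  | cons a l ih =>
    have hl' : ∀ f ∈ l, t ∉ f := fun f hf => hl f (List.mem_cons_of_mem a hf)
    have hinv : ∀ x, (l.map fun f => ∏ e ∈ Et, csign (f ∪ e) (cnotMap a t x)).prod =
        (l.map fun f => ∏ e ∈ Et, csign (f ∪ e) x).prod := fun x => by
      refine congrArg List.prod <|
        List.map_congr_left fun f hf => Finset.prod_congr rfl fun e he => ?_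
      exact csign_cnotMap_of_notMem (by simp [hl' f hf, hEt e he]) a x
    rw [List.map_cons, seqComp_cons, Function.comp_apply, ih hl',
      CNOTgate_mul_hyperedges Et hEt _ hinv]
    funext x
    simp only [List.map_cons, List.prod_cons, mul_assoc, mul_left_comm]

end Hypergraph

/-- With qubit 1 modeled by a distinguished label `t`, let
`F` and `Ẽ` be finite sets of nonempty hyperedges none of which contains `t`.
Applying the generalized CNOT gates with target `t` and control sets from `F`
to the hypergraph state with hyperedges `{ẽ∪{t} : ẽ∈Ẽ}` toggles exactly the
hyperedges `f∪ẽ`: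
`(∏_{f∈F} CNOT_{f,t}) ∏_{ẽ∈Ẽ} C_{ẽ∪{t}} |+⟩^{⊗N}
  = ∏_{f∈F} ∏_{ẽ∈Ẽ} C_{f∪ẽ} · ∏_{ẽ∈Ẽ} C_{ẽ∪{t}} |+⟩^{⊗N}`. -/
theorem CNOT_toggles_hyperedges {ι : Type} [Fintype ι] [DecidableEq ι] (t : ι)
    (F Et : Finset (Finset ι))
    (hF : ∀ f ∈ F, f.Nonempty ∧ t ∉ f) (hEt : ∀ e ∈ Et, e.Nonempty ∧ t ∉ e) :
    seqComp (F.toList.map fun f => CNOTgate f t)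
        (fun x => (∏ e ∈ Et, csign (insert t e) x) * plusAll ι x) =
      fun x => (∏ f ∈ F, ∏ e ∈ Et, csign (f ∪ e) x) *
        ((∏ e ∈ Et, csign (insert t e) x) * plusAll ι x) := by
  rw [seqComp_map_CNOTgate Et (fun e he => (hEt e he).2) F.toList
    fun f hf => (hF f (Finset.mem_toList.1 hf)).2]
  funext x
  rw [Finset.prod_map_toList]
end
end
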